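/- arXiv:1810.08485 — 2 statements merged into one kernel-verified Lean document; each statement's English description precedes it below -/
import Mathlib

section
/- Every Meyer-σ-field Λ contains the predictable σ-field P(F^Λ) of its associated filtration F^Λ and is contained in the optional σ-field O(F^Λ) of F^Λ. Conversely, any σ-field on Ω × [0,∞) that is generated by càdlàg processes and lies between the predictable σ-field and the optional σ-field of some filtration is a Meyer-σ-field. -/
open MeasureTheory Filter Set Topology
open scoped NNReal ENNReal symmDiff Classical

noncomputable section

namespace Meyer

variable {Ω : Type*}

/-- The σ-field generated by a family of real-valued functions. -/
def genBy {α : Type*} (C : Set (α → ℝ)) : MeasurableSpace α :=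
  ⨆ f ∈ C, MeasurableSpace.comap f inferInstance

/-- A function is càdlàg: right-continuous with left limits. -/
def IsCadlag (f : ℝ≥0 → ℝ) : Prop :=
  (∀ t, Tendsto f (𝓝[≥] t) (𝓝 (f t))) ∧
  ∀ t : ℝ≥0, 0 < t → ∃ l, Tendsto f (𝓝[<] t) (𝓝 l)

/-- A Meyer-σ-field over `(Ω, mΩ)`: a σ-field on `Ω × [0,∞)` contained in the product
σ-field, generated by càdlàg processes, containing `{∅,Ω} × B([0,∞))` and stable under
stopping at deterministic times. -/
structure IsMeyer (mΩ : MeasurableSpace Ω) (Λ : MeasurableSpace (Ω × ℝ≥0)) : Prop where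
  le_prod : Λ ≤ @Prod.instMeasurableSpace Ω ℝ≥0 mΩ inferInstance
  gen_cadlag : ∃ C : Set (Ω × ℝ≥0 → ℝ),
    (∀ Z ∈ C, ∀ ω, IsCadlag fun t => Z (ω, t)) ∧ Λ = genBy C
  contains_borel : ∀ B : Set ℝ≥0, MeasurableSet B → MeasurableSet[Λ] (Set.univ ×ˢ B)
  stop_stable : ∀ Z : Ω × ℝ≥0 → ℝ, Measurable[Λ] Z → ∀ s : ℝ≥0,
    Measurable[Λ] fun p => Z (p.1, min p.2 s)

/-- A `Λ`-stopping time: `[[S,∞[[ ∈ Λ`. -/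
def IsStoppingTimeM (Λ : MeasurableSpace (Ω × ℝ≥0)) (S : Ω → ℝ≥0∞) : Prop :=
  MeasurableSet[Λ] {p : Ω × ℝ≥0 | S p.1 ≤ (p.2 : ℝ≥0∞)}

/-- The associated filtration `F^Λ_t := σ(Z_t : Z Λ-measurable)`. -/
def sigmaAt (Λ : MeasurableSpace (Ω × ℝ≥0)) (t : ℝ≥0) : MeasurableSpace Ω :=
  genBy {f : Ω → ℝ | ∃ Z : Ω × ℝ≥0 → ℝ, Measurable[Λ] Z ∧ f = fun ω => Z (ω, t)}

/-- `F^Λ_∞`. -/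
def sigmaInf (Λ : MeasurableSpace (Ω × ℝ≥0)) : MeasurableSpace Ω := ⨆ t : ℝ≥0, sigmaAt Λ t

/-- A process indexed by `[0,∞]` is `Λ`-measurable if its restriction to `Ω × [0,∞)`
is `Λ`-measurable and its value at `∞` is `F^Λ_∞`-measurable. -/
def MeasurableProcessE (Λ : MeasurableSpace (Ω × ℝ≥0)) (Z : Ω × ℝ≥0∞ → ℝ) : Prop :=
  Measurable[Λ] (fun p : Ω × ℝ≥0 => Z (p.1, (p.2 : ℝ≥0∞))) ∧
  Measurable[sigmaInf Λ] fun ω => Z (ω, ∞)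

/-- `F^Λ_S := σ(Z_S : Z a Λ-measurable process on [0,∞])`. -/
def sigmaAtTime (Λ : MeasurableSpace (Ω × ℝ≥0)) (S : Ω → ℝ≥0∞) : MeasurableSpace Ω :=
  genBy {f : Ω → ℝ | ∃ Z : Ω × ℝ≥0∞ → ℝ, MeasurableProcessE Λ Z ∧ f = fun ω => Z (ω, S ω)}

/-- `S_A`: equal to `S` on `A` and `∞` off `A`. -/
def restrictST (S : Ω → ℝ≥0∞) (A : Set Ω) : Ω → ℝ≥0∞ := fun ω => if ω ∈ A then S ω else ∞

/-- Evaluation of a process indexed by `[0,∞]` at a random time. -/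
def EvalAt (Z : Ω × ℝ≥0∞ → ℝ) (S : Ω → ℝ≥0∞) : Ω → ℝ := fun ω => Z (ω, S ω)

/-- Evaluation of a process indexed by `[0,∞)` at a (finite) random time. -/
def EvalAtF (Z : Ω × ℝ≥0 → ℝ) (S : Ω → ℝ≥0∞) : Ω → ℝ := fun ω => Z (ω, (S ω).toNNReal)

/-- Adaptedness of a process to a raw filtration. -/
def Adapted' (G : ℝ≥0 → MeasurableSpace Ω) (Z : Ω × ℝ≥0 → ℝ) : Prop :=
  ∀ t, Measurable[G t] fun ω => Z (ω, t)

/-- Predictable σ-field of a filtration: generated by continuous adapted processes. -/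
def predSF (G : ℝ≥0 → MeasurableSpace Ω) : MeasurableSpace (Ω × ℝ≥0) :=
  genBy {Z | (∀ ω, Continuous fun t => Z (ω, t)) ∧ Adapted' G Z}

/-- Optional σ-field of a filtration: generated by càdlàg adapted processes. -/
def optSF (G : ℝ≥0 → MeasurableSpace Ω) : MeasurableSpace (Ω × ℝ≥0) :=
  genBy {Z | (∀ ω, IsCadlag fun t => Z (ω, t)) ∧ Adapted' G Z}

/-- Classical stopping time of a raw filtration. -/
def IsStoppingTimeCl (G : ℝ≥0 → MeasurableSpace Ω) (T : Ω → ℝ≥0∞) : Prop :=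
  ∀ t : ℝ≥0, MeasurableSet[G t] {ω | T ω ≤ (t : ℝ≥0∞)}

/-- The right-continuous filtration `F^Λ_{t+}`. -/
def FplusLambda (Λ : MeasurableSpace (Ω × ℝ≥0)) (t : ℝ≥0) : MeasurableSpace Ω :=
  ⨅ (s : ℝ≥0) (_ : t < s), sigmaAt Λ s

/-- Two processes are indistinguishable. -/
def Indistinguishable {τ : Type*} [MeasurableSpace Ω] (P : Measure Ω)
    (X Y : Ω × τ → ℝ) : Prop :=
  P {ω | ∃ t, X (ω, t) ≠ Y (ω, t)} = 0

/-- `Λ` is `P`-complete: every product-measurable process indistinguishable from a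
`Λ`-measurable process is itself `Λ`-measurable. -/
def IsPCompleteM [mΩ : MeasurableSpace Ω] (P : Measure Ω)
    (Λ : MeasurableSpace (Ω × ℝ≥0)) : Prop :=
  ∀ Z Z' : Ω × ℝ≥0 → ℝ, Measurable Z → Measurable[Λ] Z' →
    Indistinguishable P Z Z' → Measurable[Λ] Z

/-- A raw filtration satisfies the usual conditions: monotone, sub-σ-fields of `mΩ`,
right-continuous and `P`-complete. -/
def UsualConditions [mΩ : MeasurableSpace Ω] (P : Measure Ω)
    (G : ℝ≥0 → MeasurableSpace Ω) : Prop :=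
  Monotone G ∧ (∀ t, G t ≤ mΩ) ∧
  (∀ t : ℝ≥0, G t = ⨅ (s : ℝ≥0) (_ : t < s), G s) ∧
  ∀ N : Set Ω, MeasurableSet N → P N = 0 → MeasurableSet[G 0] N

variable [mΩ : MeasurableSpace Ω]

/-- `Λ`-martingale (indexed by `[0,∞]`). -/
def IsMartingaleM (P : Measure Ω) (Λ : MeasurableSpace (Ω × ℝ≥0))
    (Z : Ω × ℝ≥0∞ → ℝ) : Prop :=
  MeasurableProcessE Λ Z ∧
  (∀ S, IsStoppingTimeM Λ S → Integrable (EvalAt Z S) P) ∧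
  ∀ S T : Ω → ℝ≥0∞, IsStoppingTimeM Λ S → IsStoppingTimeM Λ T → S ≤ T →
    EvalAt Z S =ᵐ[P] P[EvalAt Z T|sigmaAtTime Λ S]

/-- `Λ`-supermartingale (indexed by `[0,∞]`). -/
def IsSupermartingaleM (P : Measure Ω) (Λ : MeasurableSpace (Ω × ℝ≥0))
    (Z : Ω × ℝ≥0∞ → ℝ) : Prop :=
  MeasurableProcessE Λ Z ∧
  (∀ S, IsStoppingTimeM Λ S → Integrable (EvalAt Z S) P) ∧
  ∀ S T : Ω → ℝ≥0∞, IsStoppingTimeM Λ S → IsStoppingTimeM Λ T → S ≤ T →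
    P[EvalAt Z T|sigmaAtTime Λ S] ≤ᵐ[P] EvalAt Z S

/-- Class `(D^Λ)` for a process: uniform integrability of `{Z_T : T ∈ S^Λ}`. -/
def ClassD (P : Measure Ω) (Λ : MeasurableSpace (Ω × ℝ≥0)) (Z : Ω × ℝ≥0∞ → ℝ) : Prop :=
  UniformIntegrable (fun S : {S : Ω → ℝ≥0∞ // IsStoppingTimeM Λ S} => EvalAt Z S.1) 1 P

/-- Class `(D^Λ)` for a system. -/
def ClassDSys (P : Measure Ω) (Λ : MeasurableSpace (Ω × ℝ≥0))
    (ZS : (Ω → ℝ≥0∞) → Ω → ℝ) : Prop :=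
  UniformIntegrable (fun S : {S : Ω → ℝ≥0∞ // IsStoppingTimeM Λ S} => ZS S.1) 1 P

/-- `pY` is a `Λ`-projection of `Y` (processes indexed by `[0,∞]`). -/
def IsProjectionE (P : Measure Ω) (Λ : MeasurableSpace (Ω × ℝ≥0))
    (Y pY : Ω × ℝ≥0∞ → ℝ) : Prop :=
  MeasurableProcessE Λ pY ∧
  ∀ S, IsStoppingTimeM Λ S → (∀ ω, S ω < ∞) →
    EvalAt pY S =ᵐ[P] P[EvalAt Y S|sigmaAtTime Λ S]

/-- `pY` is a `Λ`-projection of `Y` (processes indexed by `[0,∞)`). -/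
def IsProjectionF (P : Measure Ω) (Λ : MeasurableSpace (Ω × ℝ≥0))
    (Y pY : Ω × ℝ≥0 → ℝ) : Prop :=
  Measurable[Λ] pY ∧
  ∀ S, IsStoppingTimeM Λ S → (∀ ω, S ω < ∞) →
    EvalAtF pY S =ᵐ[P] P[EvalAtF Y S|sigmaAtTime Λ S]

/-- Right-upper-semicontinuous envelope `Z^*` (with `Z^*_∞ := Z_∞`). -/
def rightLimsup (Z : Ω × ℝ≥0∞ → ℝ) (ω : Ω) (t : ℝ≥0∞) : ℝ :=
  if t = ∞ then Z (ω, ∞)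
  else limsup (fun s : ℝ≥0 => Z (ω, (s : ℝ≥0∞))) (𝓝[>] t.toNNReal)

/-- Right-lower-semicontinuous envelope `Z_*` (with `Z_{∞*} := Z_∞`). -/
def rightLiminf (Z : Ω × ℝ≥0∞ → ℝ) (ω : Ω) (t : ℝ≥0∞) : ℝ :=
  if t = ∞ then Z (ω, ∞)
  else liminf (fun s : ℝ≥0 => Z (ω, (s : ℝ≥0∞))) (𝓝[>] t.toNNReal)

/-- Left-upper-semicontinuous envelope `*Z` (with `*Z_0 := Z_0` and
`*Z_∞ := limsup_{t↑∞} Z_t`). -/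
def leftLimsup (Z : Ω × ℝ≥0∞ → ℝ) (ω : Ω) (t : ℝ≥0∞) : ℝ :=
  if t = 0 then Z (ω, 0)
  else if t = ∞ then limsup (fun s : ℝ≥0 => Z (ω, (s : ℝ≥0∞))) atTop
  else limsup (fun s : ℝ≥0 => Z (ω, (s : ℝ≥0∞))) (𝓝[<] t.toNNReal)

/-- Left-lower-semicontinuous envelope `_*Z`. -/
def leftLiminf (Z : Ω × ℝ≥0∞ → ℝ) (ω : Ω) (t : ℝ≥0∞) : ℝ :=
  if t = 0 then Z (ω, 0)
  else if t = ∞ then liminf (fun s : ℝ≥0 => Z (ω, (s : ℝ≥0∞))) atTop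
  else liminf (fun s : ℝ≥0 => Z (ω, (s : ℝ≥0∞))) (𝓝[<] t.toNNReal)

/-- `T` is `Λ`-accessible. -/
def IsAccessibleM [mΩ2 : MeasurableSpace Ω] (P : Measure Ω)
    (Λ : MeasurableSpace (Ω × ℝ≥0)) (T : Ω → ℝ≥0∞) : Prop :=
  ∃ Tn : ℕ → Ω → ℝ≥0∞, (∀ n, IsStoppingTimeM Λ (Tn n)) ∧
    P (⋃ n, {ω | Tn n ω = T ω ∧ T ω < ∞}) = P {ω | T ω < ∞}

/-- `T` is totally `Λ`-inaccessible. -/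
def IsTotallyInaccessibleM [mΩ2 : MeasurableSpace Ω] (P : Measure Ω)
    (Λ : MeasurableSpace (Ω × ℝ≥0)) (T : Ω → ℝ≥0∞) : Prop :=
  ∀ S, IsStoppingTimeM Λ S → P {ω | S ω = T ω ∧ T ω < ∞} = 0

/-- The σ-field `G_{T-}`: generated by `G_0` and the sets `A ∩ {t < T}`, `A ∈ G_t`. -/
def sigmaPre (G : ℝ≥0 → MeasurableSpace Ω) (T : Ω → ℝ≥0∞) : MeasurableSpace Ω :=
  MeasurableSpace.generateFrom
    ({A | MeasurableSet[G 0] A} ∪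
      {A | ∃ (t : ℝ≥0) (B : Set Ω), MeasurableSet[G t] B ∧ A = B ∩ {ω | (t : ℝ≥0∞) < T ω}})

/-- The σ-field `G_T` of a classical stopping time `T`. -/
def sigmaAtCl (G : ℝ≥0 → MeasurableSpace Ω) (T : Ω → ℝ≥0∞) : MeasurableSpace Ω :=
  MeasurableSpace.generateFrom
    {A | ∀ t : ℝ≥0, MeasurableSet[G t] (A ∩ {ω | T ω ≤ (t : ℝ≥0∞)})}

/-- A divided stopping time `σ = (T, W⁻, W, W⁺)`. -/
structure IsDividedST (Λ : MeasurableSpace (Ω × ℝ≥0)) (T : Ω → ℝ≥0∞)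
    (Wm W Wp : Set Ω) : Prop where
  stopping : IsStoppingTimeCl (FplusLambda Λ) T
  cover : Wm ∪ W ∪ Wp = Set.univ
  disj_mw : Wm ∩ W = ∅
  disj_mp : Wm ∩ Wp = ∅
  disj_wp : W ∩ Wp = ∅
  mem_m : MeasurableSet[sigmaPre (FplusLambda Λ) T] Wm
  m_pos : Wm ∩ {ω | T ω = 0} = ∅
  mem_w : MeasurableSet[sigmaAtTime Λ T] W
  mem_p : MeasurableSet[sigmaAtCl (FplusLambda Λ) T] Wp
  p_fin : Wp ∩ {ω | T ω = ∞} = ∅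
  pred_m : IsStoppingTimeM (predSF (FplusLambda Λ)) (restrictST T Wm)
  st_w : IsStoppingTimeM Λ (restrictST T W)

/-- The value `Z_σ` of a process at a divided stopping time. -/
def divEval (Z : Ω × ℝ≥0∞ → ℝ) (T : Ω → ℝ≥0∞) (Wm W Wp : Set Ω) : Ω → ℝ := fun ω =>
  if ω ∈ Wm then leftLimsup Z ω (T ω)
  else if ω ∈ W then Z (ω, T ω)
  else rightLimsup Z ω (T ω)

/-- `Zb` is the `Λ`-Snell envelope of the system `ZS`: a `Λ`-supermartingale which at
each `Λ`-stopping time `S` is (a version of) `ess sup_{T ∈ S^Λ, T ≥ S} E[Z(T) | F^Λ_S]`. -/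
def IsSnellSys (P : Measure Ω) (Λ : MeasurableSpace (Ω × ℝ≥0))
    (ZS : (Ω → ℝ≥0∞) → Ω → ℝ) (Zb : Ω × ℝ≥0∞ → ℝ) : Prop :=
  IsSupermartingaleM P Λ Zb ∧
  ∀ S, IsStoppingTimeM Λ S →
    (∀ T, IsStoppingTimeM Λ T → S ≤ T →
      P[ZS T|sigmaAtTime Λ S] ≤ᵐ[P] EvalAt Zb S) ∧
    ∀ U : Ω → ℝ,
      (∀ T, IsStoppingTimeM Λ T → S ≤ T → P[ZS T|sigmaAtTime Λ S] ≤ᵐ[P] U) →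
      EvalAt Zb S ≤ᵐ[P] U

/-- `Zb` is the `Λ`-Snell envelope of the process `Z`. -/
def IsSnellProc (P : Measure Ω) (Λ : MeasurableSpace (Ω × ℝ≥0))
    (Z Zb : Ω × ℝ≥0∞ → ℝ) : Prop :=
  IsSnellSys P Λ (fun S => EvalAt Z S) Zb

/-- An `S^Λ`-system. -/
def IsSystemM (P : Measure Ω) (Λ : MeasurableSpace (Ω × ℝ≥0))
    (ZS : (Ω → ℝ≥0∞) → Ω → ℝ) : Prop :=
  (∀ S T, IsStoppingTimeM Λ S → IsStoppingTimeM Λ T →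
    ∀ᵐ ω ∂P, S ω = T ω → ZS S ω = ZS T ω) ∧
  ∀ S, IsStoppingTimeM Λ S → Measurable[sigmaAtTime Λ S] (ZS S)

/-- An `S^Λ`-supermartingale system. -/
def IsSupermartingaleSystem (P : Measure Ω) (Λ : MeasurableSpace (Ω × ℝ≥0))
    (ZS : (Ω → ℝ≥0∞) → Ω → ℝ) : Prop :=
  IsSystemM P Λ ZS ∧ (∀ S, IsStoppingTimeM Λ S → Integrable (ZS S) P) ∧
  ∀ S T, IsStoppingTimeM Λ S → IsStoppingTimeM Λ T → S ≤ T →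
    P[ZS T|sigmaAtTime Λ S] ≤ᵐ[P] ZS S

/-- The process `Zb` aggregates the system `ZS`. -/
def Aggregates (P : Measure Ω) (Λ : MeasurableSpace (Ω × ℝ≥0))
    (Zb : Ω × ℝ≥0∞ → ℝ) (ZS : (Ω → ℝ≥0∞) → Ω → ℝ) : Prop :=
  ∀ S, IsStoppingTimeM Λ S → EvalAt Zb S =ᵐ[P] ZS S

/-- `pY` is the `F`-predictable projection of `Y` (with the convention `(^P Y)_∞ = 0`). -/
def IsPredProjE (P : Measure Ω) (G : ℝ≥0 → MeasurableSpace Ω)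
    (Y pY : Ω × ℝ≥0∞ → ℝ) : Prop :=
  MeasurableProcessE (predSF G) pY ∧ (∀ ω, pY (ω, ∞) = 0) ∧
  ∀ S, IsStoppingTimeM (predSF G) S → (∀ ω, S ω < ∞) →
    EvalAt pY S =ᵐ[P] P[EvalAt Y S|sigmaAtTime (predSF G) S]
section Statement0Aux

lemma measurable_genBy_mem {α : Type*} {C : Set (α → ℝ)} {Z : α → ℝ} (h : Z ∈ C) :
    Measurable[genBy C] Z :=
  measurable_iff_comap_le.2 <|
    le_iSup₂ (f := fun f (_ : f ∈ C) => MeasurableSpace.comap f inferInstance) Z h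

lemma genBy_le_iff {α : Type*} {C : Set (α → ℝ)} {m : MeasurableSpace α} :
    genBy C ≤ m ↔ ∀ Z ∈ C, Measurable[m] Z := by
  simp only [genBy, iSup₂_le_iff]
  exact forall₂_congr fun Z _ => measurable_iff_comap_le.symm

lemma measurable_to_genBy {β α : Type*} [mβ : MeasurableSpace β] {C : Set (α → ℝ)} {f : β → α}
    (h : ∀ Z ∈ C, Measurable fun b => Z (f b)) :
    @Measurable β α mβ (genBy C) f := by
  rw [measurable_iff_comap_le, genBy, MeasurableSpace.comap_iSup]
  refine iSup_le fun Z => ?_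
  rw [MeasurableSpace.comap_iSup]
  refine iSup_le fun hZ => ?_
  rw [MeasurableSpace.comap_comp]
  exact measurable_iff_comap_le.1 (h Z hZ)

lemma measurable_discrete {Ω : Type*} {m' : MeasurableSpace (Ω × ℝ≥0)} (W : Ω × ℝ≥0 → ℝ)
    (v : ℕ → ℝ≥0) (idx : ℝ≥0 → ℕ)
    (h : ∀ (k : ℕ) (E : Set ℝ), MeasurableSet E →
      MeasurableSet[m'] (((fun ω => W (ω, v k)) ⁻¹' E) ×ˢ (idx ⁻¹' {k}))) :
    Measurable[m'] fun p : Ω × ℝ≥0 => W (p.1, v (idx p.2)) := by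
  intro E hE
  have hEq : (fun p : Ω × ℝ≥0 => W (p.1, v (idx p.2))) ⁻¹' E =
      ⋃ k, ((fun ω => W (ω, v k)) ⁻¹' E) ×ˢ (idx ⁻¹' {k}) := by
    ext p
    simp only [Set.mem_preimage, Set.mem_iUnion, Set.mem_prod, Set.mem_singleton_iff]
    constructor
    · intro hp; exact ⟨idx p.2, hp, rfl⟩
    · rintro ⟨k, hk, hik⟩; rw [hik]; exact hk
  rw [hEq]
  exact MeasurableSet.iUnion fun k => h k E hE

lemma tendsto_floor_dyadic (t : ℝ≥0) :
    Tendsto (fun n : ℕ => ((⌊(t : ℝ) * 2 ^ n⌋₊ : ℝ≥0) / 2 ^ n)) atTop (𝓝 t) := by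
  rw [← NNReal.tendsto_coe]
  have hco : ∀ n : ℕ, (((⌊(t : ℝ) * 2 ^ n⌋₊ : ℝ≥0) / 2 ^ n : ℝ≥0) : ℝ)
      = (⌊(t : ℝ) * 2 ^ n⌋₊ : ℝ) / 2 ^ n := by intro n; push_cast; ring
  simp only [hco]
  have h2 : ∀ n : ℕ, (0 : ℝ) < 2 ^ n := fun n => by positivity
  refine tendsto_of_tendsto_of_tendsto_of_le_of_le
    (g := fun n : ℕ => (t : ℝ) - (1 / 2) ^ n) (h := fun _ => (t : ℝ)) ?_ tendsto_const_nhds ?_ ?_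
  · have h3 : Tendsto (fun n : ℕ => (t : ℝ) - (1 / 2) ^ n) atTop (𝓝 ((t : ℝ) - 0)) :=
      Tendsto.sub tendsto_const_nhds
        (tendsto_pow_atTop_nhds_zero_of_lt_one (by norm_num : (0:ℝ) ≤ 1/2) (by norm_num))
    simpa using h3
  · intro n
    have h1 : (t : ℝ) * 2 ^ n < ⌊(t : ℝ) * 2 ^ n⌋₊ + 1 := Nat.lt_floor_add_one _
    rw [le_div_iff₀ (h2 n)]
    have hpow : ((1 : ℝ) / 2) ^ n * 2 ^ n = 1 := by rw [← mul_pow]; norm_num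
    nlinarith
  · intro n
    rw [div_le_iff₀ (h2 n)]
    exact Nat.floor_le (by positivity)

lemma tendsto_ceil_dyadic (t : ℝ≥0) :
    Tendsto (fun n : ℕ => ((⌈(t : ℝ) * 2 ^ n⌉₊ : ℝ≥0) / 2 ^ n)) atTop (𝓝[≥] t) := by
  have h2 : ∀ n : ℕ, (0 : ℝ) < 2 ^ n := fun n => by positivity
  have hco : ∀ n : ℕ, (((⌈(t : ℝ) * 2 ^ n⌉₊ : ℝ≥0) / 2 ^ n : ℝ≥0) : ℝ)
      = (⌈(t : ℝ) * 2 ^ n⌉₊ : ℝ) / 2 ^ n := by intro n; push_cast; ring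
  rw [tendsto_nhdsWithin_iff]
  constructor
  · rw [← NNReal.tendsto_coe]
    simp only [hco]
    refine tendsto_of_tendsto_of_tendsto_of_le_of_le
      (g := fun _ => (t : ℝ)) (h := fun n : ℕ => (t : ℝ) + (1 / 2) ^ n) tendsto_const_nhds ?_ ?_ ?_
    · have h3 : Tendsto (fun n : ℕ => (t : ℝ) + (1 / 2) ^ n) atTop (𝓝 ((t : ℝ) + 0)) :=
        Tendsto.add tendsto_const_nhds
          (tendsto_pow_atTop_nhds_zero_of_lt_one (by norm_num : (0:ℝ) ≤ 1/2) (by norm_num))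
      simpa using h3
    · intro n
      rw [le_div_iff₀ (h2 n)]
      exact Nat.le_ceil _
    · intro n
      have h1 : (⌈(t : ℝ) * 2 ^ n⌉₊ : ℝ) < (t : ℝ) * 2 ^ n + 1 :=
        Nat.ceil_lt_add_one (by positivity)
      rw [div_le_iff₀ (h2 n)]
      have hpow : ((1 : ℝ) / 2) ^ n * 2 ^ n = 1 := by rw [← mul_pow]; norm_num
      nlinarith
  · refine Filter.Eventually.of_forall fun n => ?_
    show t ≤ _
    rw [← NNReal.coe_le_coe, hco, le_div_iff₀ (h2 n)]
    exact Nat.le_ceil _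

end Statement0Aux


section Statement0Main

lemma meyer_prod_mem {Λ : MeasurableSpace (Ω × ℝ≥0)} (hM : IsMeyer mΩ Λ) (s : ℝ≥0)
    {f : Ω → ℝ} (hf : Measurable[sigmaAt Λ s] f) {B : Set ℝ≥0} (hB : MeasurableSet B)
    (hBs : B ⊆ Set.Ici s) {E : Set ℝ} (hE : MeasurableSet E) :
    MeasurableSet[Λ] ((f ⁻¹' E) ×ˢ B) := by
  let m' : MeasurableSpace Ω :=
    { MeasurableSet' := fun A => MeasurableSet[Λ] (A ×ˢ B)
      measurableSet_empty := by
        show MeasurableSet[Λ] ((∅ : Set Ω) ×ˢ B)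
        rw [Set.empty_prod]
        exact @MeasurableSet.empty _ Λ
      measurableSet_compl := by
        intro A hA
        show MeasurableSet[Λ] (Aᶜ ×ˢ B)
        have hEq : Aᶜ ×ˢ B = (Set.univ ×ˢ B) \ (A ×ˢ B) := by
          ext p
          by_cases h : p.2 ∈ B <;> simp [h]
        rw [hEq]
        exact MeasurableSet.diff (hM.contains_borel B hB) hA
      measurableSet_iUnion := by
        intro g hg
        show MeasurableSet[Λ] ((⋃ i, g i) ×ˢ B)
        rw [Set.iUnion_prod_const]
        exact MeasurableSet.iUnion hg }
  have hle : sigmaAt Λ s ≤ m' := by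
    refine genBy_le_iff.2 ?_
    rintro g ⟨W, hW, rfl⟩
    intro E' hE'
    show MeasurableSet[Λ] (((fun ω => W (ω, s)) ⁻¹' E') ×ˢ B)
    have hstop := hM.stop_stable W hW s
    have hEq : ((fun ω => W (ω, s)) ⁻¹' E') ×ˢ B
        = ((fun p : Ω × ℝ≥0 => W (p.1, min p.2 s)) ⁻¹' E') ∩ (Set.univ ×ˢ B) := by
      ext p
      simp only [Set.mem_prod, Set.mem_preimage, Set.mem_inter_iff, Set.mem_univ, true_and]
      constructor
      · rintro ⟨h1, h2⟩
        rw [min_eq_right (hBs h2)]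
        exact ⟨h1, h2⟩
      · rintro ⟨h1, h2⟩
        rw [min_eq_right (hBs h2)] at h1
        exact ⟨h1, h2⟩
    rw [hEq]
    exact MeasurableSet.inter (hstop hE') (hM.contains_borel B hB)
  exact hle _ (hf hE)

lemma predSF_le_meyer {Λ : MeasurableSpace (Ω × ℝ≥0)} (hM : IsMeyer mΩ Λ) : predSF (sigmaAt Λ) ≤ Λ := by
  refine genBy_le_iff.2 ?_
  rintro Z ⟨hcont, hadapt⟩
  have hmn : ∀ n : ℕ, Measurable[Λ] fun p : Ω × ℝ≥0 =>
      Z (p.1, ((⌊(p.2 : ℝ) * 2 ^ n⌋₊ : ℝ≥0) / 2 ^ n)) := by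
    intro n
    refine measurable_discrete (m' := Λ) Z (fun k => (k : ℝ≥0) / 2 ^ n)
      (fun t => ⌊(t : ℝ) * 2 ^ n⌋₊) (fun k E hE => ?_)
    refine meyer_prod_mem hM ((k : ℝ≥0) / 2 ^ n) (hadapt _) ?_ ?_ hE
    · exact (Nat.measurable_floor.comp
        (NNReal.continuous_coe.measurable.mul measurable_const)) (measurableSet_singleton k)
    · intro t ht
      simp only [Set.mem_preimage, Set.mem_singleton_iff] at ht
      show (k : ℝ≥0) / 2 ^ n ≤ t
      rw [← NNReal.coe_le_coe]
      push_cast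
      rw [div_le_iff₀ (by positivity : (0:ℝ) < 2 ^ n), ← ht]
      exact Nat.floor_le (by positivity)
  refine @measurable_of_tendsto_metrizable' (Ω × ℝ≥0) ℝ Λ _ _ _ _ ℕ _ _ atTop _ _ hmn
    (tendsto_pi_nhds.2 fun p => ?_)
  exact ((hcont p.1).tendsto p.2).comp (tendsto_floor_dyadic p.2)

lemma meyer_le_optSF {Λ : MeasurableSpace (Ω × ℝ≥0)} (hM : IsMeyer mΩ Λ) : Λ ≤ optSF (sigmaAt Λ) := by
  obtain ⟨C, hC, hΛ⟩ := hM.gen_cadlag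
  have key : ∀ W ∈ C, Measurable[optSF (sigmaAt Λ)] W := by
    intro W hW
    have hWΛ : Measurable[Λ] W := by
      rw [hΛ]
      exact measurable_genBy_mem hW
    exact measurable_genBy_mem ⟨hC W hW, fun t => measurable_genBy_mem ⟨W, hWΛ, rfl⟩⟩
  calc Λ = genBy C := hΛ
    _ ≤ _ := genBy_le_iff.2 key

lemma cadlag_adapted_measurable {G : ℝ≥0 → MeasurableSpace Ω} (hle : ∀ t, G t ≤ mΩ)
    {W : Ω × ℝ≥0 → ℝ} (hc : ∀ ω, IsCadlag fun t => W (ω, t)) (ha : Adapted' G W) :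
    Measurable W := by
  have hm : ∀ t, Measurable fun ω => W (ω, t) := fun t => (ha t).mono (hle t) le_rfl
  have hmn : ∀ n : ℕ, Measurable fun p : Ω × ℝ≥0 =>
      W (p.1, ((⌈(p.2 : ℝ) * 2 ^ n⌉₊ : ℝ≥0) / 2 ^ n)) := by
    intro n
    refine measurable_discrete W (fun k => (k : ℝ≥0) / 2 ^ n)
      (fun t => ⌈(t : ℝ) * 2 ^ n⌉₊) (fun k E hE => ?_)
    refine MeasurableSet.prod (hm _ hE) ?_
    exact (Nat.measurable_ceil.comp
      (NNReal.continuous_coe.measurable.mul measurable_const)) (measurableSet_singleton k)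
  refine measurable_of_tendsto_metrizable' atTop hmn (tendsto_pi_nhds.2 fun p => ?_)
  exact ((hc p.1).1 p.2).comp (tendsto_ceil_dyadic p.2)

lemma optSF_le_prod {G : ℝ≥0 → MeasurableSpace Ω} (hle : ∀ t, G t ≤ mΩ) :
    optSF G ≤ (inferInstance : MeasurableSpace (Ω × ℝ≥0)) :=
  genBy_le_iff.2 fun _ hW => cadlag_adapted_measurable hle hW.1 hW.2

lemma eval_optSF {G : ℝ≥0 → MeasurableSpace Ω} (s : ℝ≥0) {Z : Ω × ℝ≥0 → ℝ}
    (hZ : Measurable[optSF G] Z) : Measurable[G s] fun ω => Z (ω, s) := by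
  have hι : @Measurable Ω (Ω × ℝ≥0) (G s) (optSF G) (fun ω => (ω, s)) :=
    measurable_to_genBy (mβ := G s) fun W hW => hW.2 s
  exact hZ.comp hι

lemma pred_ramp {G : ℝ≥0 → MeasurableSpace Ω} (hmono : Monotone G) (s : ℝ≥0) {f : Ω → ℝ}
    (hf : Measurable[G s] f) :
    Measurable[predSF G] fun p : Ω × ℝ≥0 => f p.1 * (if s < p.2 then (1 : ℝ) else 0) := by
  set g : ℕ → ℝ≥0 → ℝ := fun n t => max 0 (min 1 ((n + 1 : ℝ) * ((t : ℝ) - (s : ℝ)))) with hg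
  have hg0 : ∀ n t, t ≤ s → g n t = 0 := by
    intro n t ht
    have h1 : ((t : ℝ) - (s : ℝ)) ≤ 0 := sub_nonpos.2 (NNReal.coe_le_coe.2 ht)
    have h2 : (n + 1 : ℝ) * ((t : ℝ) - (s : ℝ)) ≤ 0 :=
      mul_nonpos_of_nonneg_of_nonpos (by positivity) h1
    show max 0 (min 1 ((n + 1 : ℝ) * ((t : ℝ) - (s : ℝ)))) = 0
    rw [min_eq_right (h2.trans zero_le_one), max_eq_left h2]
  have hmem : ∀ n : ℕ, Measurable[predSF G] fun p : Ω × ℝ≥0 => f p.1 * g n p.2 := by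
    intro n
    refine measurable_genBy_mem ⟨fun ω => ?_, fun t => ?_⟩
    · show Continuous fun t : ℝ≥0 => f ω * g n t
      exact continuous_const.mul (continuous_const.max (continuous_const.min
        (continuous_const.mul (NNReal.continuous_coe.sub continuous_const))))
    · show Measurable[G t] fun ω => f ω * g n t
      rcases le_or_gt t s with h | h
      · simp only [hg0 n t h, mul_zero]
        exact measurable_const
      · exact (hf.mono (hmono h.le) le_rfl).mul measurable_const
  refine @measurable_of_tendsto_metrizable' (Ω × ℝ≥0) ℝ (predSF G) _ _ _ _ ℕ _ _ atTop _ _ hmem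
    (tendsto_pi_nhds.2 fun p => ?_)
  show Tendsto (fun n => f p.1 * g n p.2) atTop
    (𝓝 (f p.1 * (if s < p.2 then (1 : ℝ) else 0)))
  rcases le_or_gt p.2 s with h | h
  · simp only [hg0 _ _ h, mul_zero, if_neg (not_lt.2 h)]
    exact tendsto_const_nhds
  · rw [if_pos h, mul_one]
    have hd : (0 : ℝ) < (p.2 : ℝ) - (s : ℝ) := sub_pos.2 (NNReal.coe_lt_coe.2 h)
    obtain ⟨N, hN⟩ := exists_nat_ge (1 / ((p.2 : ℝ) - (s : ℝ)))
    refine tendsto_atTop_of_eventually_const (i₀ := N) fun n hn => ?_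
    have h1 : (1 : ℝ) ≤ (n + 1 : ℝ) * ((p.2 : ℝ) - (s : ℝ)) := by
      rw [div_le_iff₀ hd] at hN
      have h2 : (N : ℝ) ≤ (n + 1 : ℝ) := by exact_mod_cast Nat.le_succ_of_le hn
      nlinarith
    have hg1 : g n p.2 = 1 := by
      show max 0 (min 1 ((n + 1 : ℝ) * ((p.2 : ℝ) - (s : ℝ)))) = 1
      rw [min_eq_left h1, max_eq_right zero_le_one]
    rw [hg1, mul_one]

end Statement0Main

/-- Every Meyer-σ-field contains the predictable σ-field of its
associated filtration and is contained in the optional σ-field thereof; conversely,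
any σ-field generated by càdlàg processes lying between the predictable and optional
σ-field of some filtration is a Meyer-σ-field. -/
theorem statement0 :
    (∀ Λ : MeasurableSpace (Ω × ℝ≥0), IsMeyer mΩ Λ →
      predSF (sigmaAt Λ) ≤ Λ ∧ Λ ≤ optSF (sigmaAt Λ)) ∧
    (∀ Λ : MeasurableSpace (Ω × ℝ≥0),
      (∃ C : Set (Ω × ℝ≥0 → ℝ),
        (∀ Z ∈ C, ∀ ω, IsCadlag fun t => Z (ω, t)) ∧ Λ = genBy C) →
      (∃ G : ℝ≥0 → MeasurableSpace Ω, Monotone G ∧ (∀ t, G t ≤ mΩ) ∧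
        predSF G ≤ Λ ∧ Λ ≤ optSF G) →
      IsMeyer mΩ Λ) := by
  constructor
  · exact fun Λ hM => ⟨predSF_le_meyer hM, meyer_le_optSF hM⟩
  · rintro Λ hC ⟨G, hmono, hGle, hpred, hopt⟩
    have hsnd : Measurable[Λ] fun p : Ω × ℝ≥0 => (p.2 : ℝ) := by
      refine (measurable_genBy_mem ?_).mono hpred le_rfl
      refine ⟨fun ω => ?_, fun t => ?_⟩
      · show Continuous fun t : ℝ≥0 => (t : ℝ)
        exact NNReal.continuous_coe
      · show Measurable[G t] fun _ : Ω => (t : ℝ)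
        exact measurable_const
    have hborel : ∀ B : Set ℝ≥0, MeasurableSet B → MeasurableSet[Λ] (Set.univ ×ˢ B) := by
      intro B hB
      let m'' : MeasurableSpace ℝ≥0 :=
        { MeasurableSet' := fun A => MeasurableSet[Λ] (Set.univ ×ˢ A)
          measurableSet_empty := by
            show MeasurableSet[Λ] ((Set.univ : Set Ω) ×ˢ (∅ : Set ℝ≥0))
            rw [Set.prod_empty]
            exact @MeasurableSet.empty _ Λ
          measurableSet_compl := by
            intro A hA
            show MeasurableSet[Λ] (Set.univ ×ˢ Aᶜ)
            have hEq : (Set.univ : Set Ω) ×ˢ Aᶜ = ((Set.univ : Set Ω) ×ˢ A)ᶜ := by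
              ext p
              simp
            rw [hEq]
            exact MeasurableSet.compl hA
          measurableSet_iUnion := by
            intro g hg
            show MeasurableSet[Λ] (Set.univ ×ˢ (⋃ i, g i))
            rw [Set.prod_iUnion]
            exact MeasurableSet.iUnion hg }
      have hle2 : NNReal.measurableSpace ≤ m'' := by
        rw [NNReal.borelSpace.measurable_eq, borel_eq_generateFrom_Iic]
        refine MeasurableSpace.generateFrom_le ?_
        rintro S ⟨q, rfl⟩
        show MeasurableSet[Λ] (Set.univ ×ˢ Set.Iic q)
        have hEq : (Set.univ : Set Ω) ×ˢ Set.Iic q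
            = (fun p : Ω × ℝ≥0 => (p.2 : ℝ)) ⁻¹' Set.Iic (q : ℝ) := by
          ext p
          simp [NNReal.coe_le_coe]
        rw [hEq]
        exact hsnd measurableSet_Iic
      exact hle2 _ hB
    refine ⟨hopt.trans (optSF_le_prod hGle), hC, hborel, ?_⟩
    intro Z hZ s
    have hfs : Measurable[G s] fun ω => Z (ω, s) := eval_optSF s (hZ.mono hopt le_rfl)
    have h1 : Measurable[Λ] fun p : Ω × ℝ≥0 => Z p * (if p.2 ≤ s then (1 : ℝ) else 0) := by
      refine hZ.mul (Measurable.ite ?_ measurable_const measurable_const)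
      have hEq : {p : Ω × ℝ≥0 | p.2 ≤ s} = Set.univ ×ˢ Set.Iic s := by
        ext p
        simp
      show MeasurableSet[Λ] {p : Ω × ℝ≥0 | p.2 ≤ s}
      rw [hEq]
      exact hborel _ measurableSet_Iic
    have h2 : Measurable[Λ] fun p : Ω × ℝ≥0 => Z (p.1, s) * (if s < p.2 then (1 : ℝ) else 0) :=
      (pred_ramp hmono s hfs).mono hpred le_rfl
    have hEq : (fun p : Ω × ℝ≥0 => Z (p.1, min p.2 s))
        = fun p : Ω × ℝ≥0 => Z p * (if p.2 ≤ s then (1 : ℝ) else 0)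
            + Z (p.1, s) * (if s < p.2 then (1 : ℝ) else 0) := by
      funext p
      rcases le_or_gt p.2 s with h | h
      · rw [min_eq_left h, if_pos h, if_neg (not_lt.2 h)]
        simp
      · rw [min_eq_right h.le, if_neg (not_le.2 h), if_pos h]
        simp
    rw [hEq]
    exact h1.add h2


end Meyer
end
end

section
/- Let Λ be a Meyer-σ-field contained in another Meyer-σ-field Λ̄. If T is a Λ̄-stopping time, then there exists a partition of {T < ∞} into sets A, I ∈ F^{Λ̄}_T such that T_A (equal to T on A and ∞ off A) is a Λ̄-stopping time which is Λ-accessible, and T_I (equal to T on I and ∞ off I) is a Λ̄-stopping time which is totally Λ-inaccessible. The sets A and I are unique up to P-null sets. -/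
open MeasureTheory Filter Set Topology
open scoped NNReal ENNReal symmDiff Classical

noncomputable section

section

variable {α : Type*}

lemma Set.symmDiff_subset_inter_union_inter {A I A' I' : Set α} (h : A ∪ I = A' ∪ I') :
    A ∆ A' ⊆ A ∩ I' ∪ A' ∩ I := by
  rintro x (⟨hA, hA'⟩ | ⟨hA', hA⟩)
  · have hx : x ∈ A' ∪ I' := h ▸ Or.inl hA
    exact Or.inl ⟨hA, hx.resolve_left hA'⟩
  · have hx : x ∈ A ∪ I := h ▸ Or.inl hA'
    exact Or.inr ⟨hA', hx.resolve_left hA⟩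

lemma Set.union_mem_of_iUnion_mem {𝒞 : Set (Set α)}
    (h𝒞 : ∀ f : ℕ → Set α, (∀ n, f n ∈ 𝒞) → ⋃ n, f n ∈ 𝒞) {s t : Set α} (hs : s ∈ 𝒞)
    (ht : t ∈ 𝒞) : s ∪ t ∈ 𝒞 := by
  have hst := union_iUnion_nat_succ fun n => if n = 0 then s else t
  simp only [if_pos, Nat.add_one_ne_zero, if_false, iUnion_const] at hst
  exact hst ▸ h𝒞 _ fun n => by split_ifs; exacts [hs, ht]

theorem MeasureTheory.exists_mem_forall_measure_diff_eq_zero [MeasurableSpace α] (μ : Measure α)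
    [IsFiniteMeasure μ] {𝒞 : Set (Set α)} (hne : 𝒞.Nonempty)
    (hmeas : ∀ s ∈ 𝒞, MeasurableSet s)
    (h𝒞 : ∀ f : ℕ → Set α, (∀ n, f n ∈ 𝒞) → ⋃ n, f n ∈ 𝒞) :
    ∃ s ∈ 𝒞, ∀ t ∈ 𝒞, μ (t \ s) = 0 := by
  obtain ⟨u, -, hu, hu𝒞⟩ := exists_seq_tendsto_sSup (hne.image μ) (OrderTop.bddAbove _)
  choose f hf𝒞 hfu using hu𝒞
  set s := ⋃ n, f n
  have hs : s ∈ 𝒞 := h𝒞 f hf𝒞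
  have hsup : sSup (μ '' 𝒞) ≤ μ s :=
    le_of_tendsto' hu fun n => hfu n ▸ measure_mono (subset_iUnion f n)
  refine ⟨s, hs, fun t ht => ?_⟩
  have hle : μ s + μ (t \ s) ≤ μ s + 0 := by
    rw [← measure_union disjoint_sdiff_right ((hmeas t ht).diff (hmeas s hs)), union_sdiff_self,
      add_zero]
    exact (le_sSup (mem_image_of_mem μ (union_mem_of_iUnion_mem h𝒞 hs ht))).trans hsup
  exact nonpos_iff_eq_zero.mp ((ENNReal.add_le_add_iff_left (measure_ne_top μ s)).mp hle)

end

namespace Meyer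

variable {Ω : Type*} {Λ : MeasurableSpace (Ω × ℝ≥0)} {S T : Ω → ℝ≥0∞} {A : Set Ω}

lemma measurable_genBy_of_mem {α : Type*} {C : Set (α → ℝ)} {f : α → ℝ} (hf : f ∈ C) :
    Measurable[genBy C] f := by
  rw [measurable_iff_comap_le]
  exact le_iSup₂ (f := fun g (_ : g ∈ C) => MeasurableSpace.comap g inferInstance) f hf

lemma setOf_restrictST_lt_top : {ω | restrictST T A ω < ∞} = A ∩ {ω | T ω < ∞} := by
  ext ω
  by_cases h : ω ∈ A <;> simp [restrictST, h]

lemma setOf_eq_restrictST :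
    {ω | S ω = restrictST T A ω ∧ restrictST T A ω < ∞} = A ∩ {ω | S ω = T ω ∧ T ω < ∞} := by
  ext ω
  by_cases h : ω ∈ A <;> simp [restrictST, h]

lemma setOf_restrictST_le :
    {p : Ω × ℝ≥0 | restrictST T A p.1 ≤ p.2} = A ×ˢ univ ∩ {p : Ω × ℝ≥0 | T p.1 ≤ p.2} := by
  ext ⟨ω, t⟩
  by_cases h : ω ∈ A <;> simp [restrictST, h]

lemma restrictST_setOf_lt_top_inter (B : Set Ω) :
    restrictST T ({ω | T ω < ∞} ∩ B) = restrictST T B := by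
  ext ω
  by_cases h : ω ∈ B <;> simp [restrictST, h, eq_comm]

lemma IsStoppingTimeM.restrictST_compl (hT : IsStoppingTimeM Λ T)
    (hTA : IsStoppingTimeM Λ (restrictST T A)) : IsStoppingTimeM Λ (restrictST T Aᶜ) := by
  unfold IsStoppingTimeM at *
  rw [setOf_restrictST_le] at hTA ⊢
  convert hT.diff hTA using 1
  ext ⟨ω, t⟩
  simp [and_comm]

lemma isStoppingTimeM_top : IsStoppingTimeM Λ fun _ : Ω => ∞ := by
  simp [IsStoppingTimeM]

variable [mΩ : MeasurableSpace Ω]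

/-- Stop `M` at time `q`, then look only at times after `q`. -/
lemma IsMeyer.measurableSet_section_prod_Ioi (hΛ : IsMeyer mΩ Λ) {M : Set (Ω × ℝ≥0)}
    (hM : MeasurableSet[Λ] M) (q : ℝ≥0) :
    MeasurableSet[Λ] ({ω | (ω, q) ∈ M} ×ˢ Ioi q) := by
  have hstop : MeasurableSet[Λ] {p : Ω × ℝ≥0 | (p.1, min p.2 q) ∈ M} := by
    convert hΛ.stop_stable _ (measurable_one.indicator hM) q (measurableSet_singleton 1) using 1
    ext p
    by_cases hp : (p.1, min p.2 q) ∈ M <;> simp [hp]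
  convert hstop.inter (hΛ.contains_borel _ (measurableSet_Ioi (a := q))) using 1
  ext ⟨ω, t⟩
  simp only [mem_prod, mem_ofPred_eq, mem_inter_iff, mem_univ, true_and, mem_Ioi]
  exact and_congr_left fun hqt => by rw [min_eq_right hqt.le]

namespace IsStoppingTimeM

lemma measurable (hΛ : Λ ≤ Prod.instMeasurableSpace) (hS : IsStoppingTimeM Λ S) :
    Measurable S := by
  refine measurable_of_Iic fun a => ?_
  rcases eq_or_ne a ∞ with rfl | ha
  · simp
  · convert measurable_prodMk_right (hΛ _ hS) (y := a.toNNReal) using 1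
    ext ω
    simp [ENNReal.coe_toNNReal ha]

lemma measurableSet_lt (hΛ : IsMeyer mΩ Λ) (hS : IsStoppingTimeM Λ S) :
    MeasurableSet[Λ] {p : Ω × ℝ≥0 | S p.1 < p.2} := by
  have h : {p : Ω × ℝ≥0 | S p.1 < p.2}
      = ⋃ q : ℚ, {ω | S ω ≤ Real.toNNReal q} ×ˢ Ioi (Real.toNNReal q) := by
    ext ⟨ω, t⟩
    simp only [mem_ofPred_eq, mem_iUnion, mem_prod, mem_Ioi]
    constructor
    · intro h
      obtain ⟨q, -, hSq, hqt⟩ := ENNReal.lt_iff_exists_rat_btwn.mp h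
      exact ⟨q, hSq.le, ENNReal.coe_lt_coe.mp hqt⟩
    · rintro ⟨q, hSq, hqt⟩
      exact hSq.trans_lt (ENNReal.coe_lt_coe.mpr hqt)
  rw [h]
  exact .iUnion fun q => hΛ.measurableSet_section_prod_Ioi hS _

lemma measurableSet_graph (hΛ : IsMeyer mΩ Λ) (hS : IsStoppingTimeM Λ S) :
    MeasurableSet[Λ] {p : Ω × ℝ≥0 | S p.1 = p.2} := by
  convert hS.diff (hS.measurableSet_lt hΛ) using 1
  ext p
  simp [le_antisymm_iff]

/-- Where `S ≠ T`, a rational time strictly between them separates `[[S,∞[[` from `[[T,∞[[`. -/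
lemma measurableSet_eq_le (hΛ : IsMeyer mΩ Λ) (hS : IsStoppingTimeM Λ S)
    (hT : IsStoppingTimeM Λ T) :
    MeasurableSet[Λ] {p : Ω × ℝ≥0 | S p.1 = T p.1 ∧ T p.1 ≤ p.2} := by
  set M := {p : Ω × ℝ≥0 | S p.1 ≤ p.2} ∆ {p : Ω × ℝ≥0 | T p.1 ≤ p.2}
  have h : {p : Ω × ℝ≥0 | S p.1 = T p.1 ∧ T p.1 ≤ p.2}
      = ({p | S p.1 ≤ p.2} ∩ {p | T p.1 ≤ p.2}) \
          ⋃ q : ℚ, {ω | (ω, Real.toNNReal q) ∈ M} ×ˢ Ioi (Real.toNNReal q) := by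
    ext ⟨ω, t⟩
    simp only [M, Set.mem_sdiff, mem_inter_iff, mem_ofPred_eq, mem_iUnion, mem_prod, mem_Ioi,
      mem_symmDiff, not_exists, not_and, not_lt]
    constructor
    · rintro ⟨hST, hTt⟩
      refine ⟨⟨hST ▸ hTt, hTt⟩, fun q hq => ?_⟩
      rw [hST] at hq
      tauto
    · rintro ⟨⟨hSt, hTt⟩, hsep⟩
      refine ⟨?_, hTt⟩
      by_contra hne
      rcases lt_or_gt_of_ne hne with h | h
      · obtain ⟨q, -, hSq, hqT⟩ := ENNReal.lt_iff_exists_rat_btwn.mp h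
        exact (hTt.trans (ENNReal.coe_le_coe.mpr (hsep q (Or.inl ⟨hSq.le, hqT.not_ge⟩)))).not_gt hqT
      · obtain ⟨q, -, hTq, hqS⟩ := ENNReal.lt_iff_exists_rat_btwn.mp h
        exact (hSt.trans (ENNReal.coe_le_coe.mpr (hsep q (Or.inr ⟨hTq.le, hqS.not_ge⟩)))).not_gt hqS
  rw [h]
  exact (hS.inter hT).diff (.iUnion fun q =>
    hΛ.measurableSet_section_prod_Ioi ((hS.diff hT).union (hT.diff hS)) _)

end IsStoppingTimeM

lemma measurableSet_sigmaAtTime_setOf_eq (hΛ : IsMeyer mΩ Λ) (hS : IsStoppingTimeM Λ S) :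
    MeasurableSet[sigmaAtTime Λ T] {ω | S ω = T ω ∧ T ω < ∞} := by
  set Z : Ω × ℝ≥0∞ → ℝ := fun p => if S p.1 = p.2 ∧ p.2 < ∞ then 1 else 0
  have hZ : MeasurableProcessE Λ Z := by
    constructor
    · have h1 : Measurable[Λ] ({p : Ω × ℝ≥0 | S p.1 = p.2}.indicator fun _ => (1 : ℝ)) :=
        measurable_const.indicator (hS.measurableSet_graph hΛ)
      convert h1 using 1
      ext p
      simp [Z, Set.indicator_apply]
    · simp [Z, measurable_const]
  have hZT : Measurable[sigmaAtTime Λ T] fun ω => Z (ω, T ω) :=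
    measurable_genBy_of_mem ⟨Z, hZ, rfl⟩
  convert hZT (measurableSet_singleton 1) using 1
  ext ω
  by_cases h : S ω = T ω ∧ T ω < ∞ <;> simp [Z, h]

lemma measurableSet_setOf_eq_and_lt_top (hS : Measurable S) (hT : Measurable T) :
    MeasurableSet {ω | S ω = T ω ∧ T ω < ∞} :=
  (measurableSet_eq_fun hS hT).inter (measurableSet_lt hT measurable_const)

lemma isStoppingTimeM_restrictST_iUnion (hΛ : IsMeyer mΩ Λ) {U : ℕ → Ω → ℝ≥0∞}
    (hU : ∀ n, IsStoppingTimeM Λ (U n)) (hT : IsStoppingTimeM Λ T) :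
    IsStoppingTimeM Λ (restrictST T (⋃ n, {ω | U n ω = T ω ∧ T ω < ∞})) := by
  unfold IsStoppingTimeM
  rw [setOf_restrictST_le]
  convert MeasurableSet.iUnion fun n => (hU n).measurableSet_eq_le hΛ hT using 1
  ext ⟨ω, t⟩
  simp +contextual [(ENNReal.coe_lt_top (r := t)).trans_le']

lemma isAccessibleM_restrictST_iUnion (P : Measure Ω) {U : ℕ → Ω → ℝ≥0∞}
    (hU : ∀ n, IsStoppingTimeM Λ (U n)) :
    IsAccessibleM P Λ (restrictST T (⋃ n, {ω | U n ω = T ω ∧ T ω < ∞})) := by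
  refine ⟨U, hU, ?_⟩
  simp_rw [setOf_eq_restrictST, setOf_restrictST_lt_top, ← inter_iUnion]
  rw [inter_self, inter_eq_left.mpr (iUnion_subset fun n ω hω => hω.2)]

lemma isTotallyInaccessibleM_restrictST_sdiff {P : Measure Ω} (B : Set Ω)
    (h : ∀ S, IsStoppingTimeM Λ S → P ({ω | S ω = T ω ∧ T ω < ∞} \ A) = 0) :
    IsTotallyInaccessibleM P Λ (restrictST T (B \ A)) := fun S hS => by
  rw [setOf_eq_restrictST, inter_comm, ← inter_sdiff_assoc]
  exact measure_mono_null (sdiff_subset_sdiff_left inter_subset_left) (h S hS)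

lemma measure_inter_eq_zero_of_isAccessibleM_of_isTotallyInaccessibleM {P : Measure Ω}
    [IsFiniteMeasure P] (hΛ : Λ ≤ Prod.instMeasurableSpace) {I : Set Ω}
    (hTA : Measurable (restrictST T A)) (hA : A ⊆ {ω | T ω < ∞})
    (hacc : IsAccessibleM P Λ (restrictST T A))
    (hinacc : IsTotallyInaccessibleM P Λ (restrictST T I)) : P (A ∩ I) = 0 := by
  obtain ⟨R, hR, hPR⟩ := hacc
  have hC : MeasurableSet
      (⋃ n, {ω | R n ω = restrictST T A ω ∧ restrictST T A ω < ∞}) :=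
    .iUnion fun n => measurableSet_setOf_eq_and_lt_top ((hR n).measurable hΛ) hTA
  simp_rw [setOf_eq_restrictST, setOf_restrictST_lt_top, ← inter_iUnion,
    inter_eq_left.mpr hA] at hC hPR
  have hmiss : P (A \ ⋃ n, {ω | R n ω = T ω ∧ T ω < ∞}) = 0 := by
    rw [← sdiff_self_inter, measure_sdiff inter_subset_left hC.nullMeasurableSet
      (measure_ne_top _ _), hPR, tsub_self]
  refine measure_mono_null ?_
    (measure_union_null hmiss (measure_iUnion_null fun n => hinacc _ (hR n)))
  simp_rw [setOf_eq_restrictST]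
  rintro ω ⟨hωA, hωI⟩
  by_cases hω : ω ∈ ⋃ n, {ω | R n ω = T ω ∧ T ω < ∞}
  · exact Or.inr (by simpa [hωI] using hω)
  · exact Or.inl ⟨hωA, hω⟩

lemma exists_forall_measure_setOf_eq_diff_eq_zero (P : Measure Ω) [IsFiniteMeasure P]
    (hΛ : Λ ≤ Prod.instMeasurableSpace) (hT : Measurable T) :
    ∃ U : ℕ → Ω → ℝ≥0∞, (∀ n, IsStoppingTimeM Λ (U n)) ∧ ∀ S, IsStoppingTimeM Λ S →
      P ({ω | S ω = T ω ∧ T ω < ∞} \ ⋃ n, {ω | U n ω = T ω ∧ T ω < ∞}) = 0 := by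
  set 𝒞 := {B | ∃ U : ℕ → Ω → ℝ≥0∞, (∀ n, IsStoppingTimeM Λ (U n)) ∧
    ⋃ n, {ω | U n ω = T ω ∧ T ω < ∞} = B}
  have h𝒞meas : ∀ B ∈ 𝒞, MeasurableSet B := by
    rintro _ ⟨U, hU, rfl⟩
    exact .iUnion fun n => measurableSet_setOf_eq_and_lt_top ((hU n).measurable hΛ) hT
  have h𝒞union : ∀ f : ℕ → Set Ω, (∀ n, f n ∈ 𝒞) → ⋃ n, f n ∈ 𝒞 := by
    intro f hf
    choose U hU hUf using hf
    refine ⟨fun n => U n.unpair.1 n.unpair.2, fun n => hU _ _, ?_⟩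
    rw [iUnion_unpair (fun i j => {ω | U i j ω = T ω ∧ T ω < ∞})]
    simp_rw [hUf]
  obtain ⟨_, ⟨U, hU, rfl⟩, hmax⟩ := exists_mem_forall_measure_diff_eq_zero P (𝒞 := 𝒞)
    ⟨_, fun _ _ => ∞, fun _ => isStoppingTimeM_top, rfl⟩ h𝒞meas h𝒞union
  exact ⟨U, hU, fun S hS => hmax _ ⟨fun _ => S, fun _ => hS, iUnion_const _⟩⟩

theorem statement4_general (P : Measure Ω) [IsProbabilityMeasure P]
    (Λ Λb : MeasurableSpace (Ω × ℝ≥0)) (hΛb : IsMeyer mΩ Λb)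
    (hle : Λ ≤ Λb) (T : Ω → ℝ≥0∞) (hT : IsStoppingTimeM Λb T) :
    ∃ A I : Set Ω,
      MeasurableSet[sigmaAtTime Λb T] A ∧ MeasurableSet[sigmaAtTime Λb T] I ∧
      A ∪ I = {ω | T ω < ∞} ∧ A ∩ I = ∅ ∧
      IsStoppingTimeM Λb (restrictST T A) ∧ IsAccessibleM P Λ (restrictST T A) ∧
      IsStoppingTimeM Λb (restrictST T I) ∧ IsTotallyInaccessibleM P Λ (restrictST T I) ∧
      ∀ A' I' : Set Ω,
        MeasurableSet[sigmaAtTime Λb T] A' → MeasurableSet[sigmaAtTime Λb T] I' →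
        A' ∪ I' = {ω | T ω < ∞} → A' ∩ I' = ∅ →
        IsStoppingTimeM Λb (restrictST T A') → IsAccessibleM P Λ (restrictST T A') →
        IsStoppingTimeM Λb (restrictST T I') → IsTotallyInaccessibleM P Λ (restrictST T I') →
        P (A ∆ A') = 0 ∧ P (I ∆ I') = 0 := by
  have hΛ : Λ ≤ Prod.instMeasurableSpace := hle.trans hΛb.le_prod
  obtain ⟨U, hU, hmax⟩ :=
    exists_forall_measure_setOf_eq_diff_eq_zero P hΛ (hT.measurable hΛb.le_prod)
  set A := ⋃ n, {ω | U n ω = T ω ∧ T ω < ∞}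
  set I := {ω | T ω < ∞} \ A
  have hUb n : IsStoppingTimeM Λb (U n) := hle _ (hU n)
  have hAfin : A ⊆ {ω | T ω < ∞} := iUnion_subset fun n ω hω => hω.2
  have hstA : IsStoppingTimeM Λb (restrictST T A) := isStoppingTimeM_restrictST_iUnion hΛb hUb hT
  have memA : MeasurableSet[sigmaAtTime Λb T] A :=
    .iUnion fun n => measurableSet_sigmaAtTime_setOf_eq hΛb (hUb n)
  have memFin : MeasurableSet[sigmaAtTime Λb T] {ω | T ω < ∞} := by
    simpa using measurableSet_sigmaAtTime_setOf_eq (T := T) hΛb hT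
  have hinacc : IsTotallyInaccessibleM P Λ (restrictST T I) :=
    isTotallyInaccessibleM_restrictST_sdiff _ hmax
  refine ⟨A, I, memA, memFin.diff memA, union_sdiff_cancel hAfin, inter_sdiff_self _ _, hstA,
    isAccessibleM_restrictST_iUnion P hU,
    (restrictST_setOf_lt_top_inter _).symm ▸ hT.restrictST_compl hstA, hinacc, ?_⟩
  intro A' I' _ _ hAI' _ hstA' haccA' _ hinacc'
  have hunion : A ∪ I = A' ∪ I' := (union_sdiff_cancel hAfin).trans hAI'.symm
  have hnull : P (A ∩ I' ∪ A' ∩ I) = 0 := measure_union_null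
    (measure_inter_eq_zero_of_isAccessibleM_of_isTotallyInaccessibleM hΛ
      (hstA.measurable hΛb.le_prod) hAfin (isAccessibleM_restrictST_iUnion P hU) hinacc')
    (measure_inter_eq_zero_of_isAccessibleM_of_isTotallyInaccessibleM hΛ
      (hstA'.measurable hΛb.le_prod) (hAI' ▸ subset_union_left) haccA' hinacc)
  refine ⟨measure_mono_null (symmDiff_subset_inter_union_inter hunion) hnull,
    measure_mono_null ?_ hnull⟩
  rw [union_comm, inter_comm A, inter_comm A']
  exact symmDiff_subset_inter_union_inter (by rwa [union_comm, union_comm I'])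

/-- Decomposition of a `Λ̄`-stopping time into a `Λ`-accessible and a
totally `Λ`-inaccessible part, unique up to `P`-null sets. -/
theorem statement4 (P : Measure Ω) [IsProbabilityMeasure P] [hPc : P.IsComplete]
    (Λ Λb : MeasurableSpace (Ω × ℝ≥0)) (hΛ : IsMeyer mΩ Λ) (hΛb : IsMeyer mΩ Λb)
    (hle : Λ ≤ Λb) (T : Ω → ℝ≥0∞) (hT : IsStoppingTimeM Λb T) :
    ∃ A I : Set Ω,
      MeasurableSet[sigmaAtTime Λb T] A ∧ MeasurableSet[sigmaAtTime Λb T] I ∧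
      A ∪ I = {ω | T ω < ∞} ∧ A ∩ I = ∅ ∧
      IsStoppingTimeM Λb (restrictST T A) ∧ IsAccessibleM P Λ (restrictST T A) ∧
      IsStoppingTimeM Λb (restrictST T I) ∧ IsTotallyInaccessibleM P Λ (restrictST T I) ∧
      ∀ A' I' : Set Ω,
        MeasurableSet[sigmaAtTime Λb T] A' → MeasurableSet[sigmaAtTime Λb T] I' →
        A' ∪ I' = {ω | T ω < ∞} → A' ∩ I' = ∅ →
        IsStoppingTimeM Λb (restrictST T A') → IsAccessibleM P Λ (restrictST T A') →
        IsStoppingTimeM Λb (restrictST T I') → IsTotallyInaccessibleM P Λ (restrictST T I') →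
        P (A ∆ A') = 0 ∧ P (I ∆ I') = 0 :=
  statement4_general P Λ Λb hΛb hle T hT

end Meyer
end
end
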